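/- For every integer k ≥ 1, the function φ_k(x) := Γ(x + k/2)/(Γ(x+1) k^x) is (weakly) decreasing on the interval [0,1]. -/

import Mathlib

/-!
Taking logarithms, the claim is that `ψ(x + a) - ψ(x + 1) ≤ log (2a)` for `x ≥ 0`, `a = k/2 ≥ 1/2`.
We work with Euler's product `GammaSeq` instead of `ψ`: the logarithm of the `n`-th approximant of
`Γ(x + a) / (Γ(x + 1) (2a)^x)` has derivative `∑_{j ≤ n} (1/(x+1+j) - 1/(x+a+j)) - log (2a)`, and
the bounds `1/c ≤ log ((c + 1/2)/(c - 1/2))` and `log ((c + 1)/c) ≤ 1/c` make that sum telescope to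
at most `log ((x + a)/(x + 1/2)) ≤ log (2a)`. So every approximant is antitone on `[0, ∞)`, and so
is their limit.
-/

open Real Set Filter Topology Finset

lemma one_div_le_log_div_of_half_lt {c : ℝ} (hc : 1 / 2 < c) :
    1 / c ≤ log ((c + 1 / 2) / (c - 1 / 2)) := by
  have h := le_hasSum (hasSum_log_one_add_inv (a := c - 1 / 2) (by linarith)) 0
    fun _ _ ↦ by positivity
  have hc' : c - 1 / 2 ≠ 0 := by linarith
  have e₁ : 2 * (1 / (2 * ((0 : ℕ) : ℝ) + 1)) * (1 / (2 * (c - 1 / 2) + 1)) ^ (2 * 0 + 1) =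
      1 / c := by
    push_cast; field_simp; ring
  have e₂ : 1 + (c - 1 / 2)⁻¹ = (c + 1 / 2) / (c - 1 / 2) := by
    rw [eq_div_iff hc', add_mul, inv_mul_cancel₀ hc']; ring
  rwa [e₁, e₂] at h

lemma log_div_le_one_div {c : ℝ} (hc : 0 < c) : log ((c + 1) / c) ≤ 1 / c := by
  have := log_le_sub_one_of_pos (show 0 < (c + 1) / c by positivity)
  rw [add_div, div_self hc.ne'] at this ⊢
  linarith

lemma sum_one_div_sub_one_div_le_log {a x : ℝ} (ha : 1 / 2 ≤ a) (hx : 0 ≤ x) (N : ℕ) :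
    ∑ j ∈ range N, (1 / (x + 1 + j) - 1 / (x + a + j)) ≤ log (2 * a) := by
  set F : ℕ → ℝ := fun j ↦ log (x + 1 / 2 + j) - log (x + a + j)
  have hstep : ∀ j ∈ range N, 1 / (x + 1 + j) - 1 / (x + a + j) ≤ F (j + 1) - F j := by
    intro j _
    have hj : (0 : ℝ) ≤ j := j.cast_nonneg
    have h₁ := one_div_le_log_div_of_half_lt (c := x + 1 + j) (by linarith)
    have h₂ := log_div_le_one_div (c := x + a + j) (by linarith)
    rw [log_div (by linarith) (by linarith)] at h₁ h₂
    rw [show x + 1 + j - 1 / 2 = x + 1 / 2 + j by ring] at h₁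
    simp only [F]; push_cast
    rw [show x + 1 / 2 + (j + 1) = x + 1 + j + 1 / 2 by ring,
      show x + a + (j + 1) = x + a + j + 1 by ring]
    linarith
  have hF_le : F N ≤ 0 := by
    simp only [F]
    linarith [log_le_log (by positivity) (show x + 1 / 2 + N ≤ x + a + N by linarith)]
  have hF_zero : -F 0 ≤ log (2 * a) := by
    simp only [F, CharP.cast_eq_zero, add_zero, neg_sub]
    have := log_le_log (by linarith) (show x + a ≤ 2 * a * (x + 1 / 2) by nlinarith)
    rw [log_mul (by linarith) (by linarith)] at this
    linarith
  calc ∑ j ∈ range N, (1 / (x + 1 + j) - 1 / (x + a + j))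
      ≤ ∑ j ∈ range N, (F (j + 1) - F j) := sum_le_sum hstep
    _ = F N - F 0 := sum_range_sub F N
    _ ≤ log (2 * a) := by linarith

lemma antitoneOn_sum_log_sub_log_sub_mul_log {a : ℝ} (ha : 1 / 2 ≤ a) (N : ℕ) :
    AntitoneOn (fun t ↦ ∑ j ∈ range N, (log (t + 1 + j) - log (t + a + j)) - t * log (2 * a))
      (Ici 0) := by
  have hderiv : ∀ t ∈ Ici (0 : ℝ), HasDerivAt
      (fun t ↦ ∑ j ∈ range N, (log (t + 1 + j) - log (t + a + j)) - t * log (2 * a))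
      (∑ j ∈ range N, (1 / (t + 1 + j) - 1 / (t + a + j)) - log (2 * a)) t := by
    intro t (ht : 0 ≤ t)
    refine (HasDerivAt.fun_sum fun j _ ↦ ?_).sub (hasDerivAt_mul_const _)
    have h₁ := (((hasDerivAt_id t).add_const 1).add_const (j : ℝ)).log (by positivity)
    have h₂ := (((hasDerivAt_id t).add_const a).add_const (j : ℝ)).log
      (by have := j.cast_nonneg (α := ℝ); simp only [id]; linarith)
    exact h₁.sub h₂
  refine antitoneOn_of_hasDerivWithinAt_nonpos (convex_Ici 0)
    (fun t ht ↦ (hderiv t ht).continuousAt.continuousWithinAt)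
    (fun t ht ↦ (hderiv t (interior_subset ht)).hasDerivWithinAt) fun t ht ↦ ?_
  rw [interior_Ici] at ht
  linarith [sum_one_div_sub_one_div_le_log ha (le_of_lt ht) N]

lemma GammaSeq_div_GammaSeq_mul_rpow {a c t : ℝ} (ha : 0 < a) (hc : 0 < c) (ht : 0 ≤ t) {n : ℕ}
    (hn : n ≠ 0) :
    GammaSeq (t + a) n / (GammaSeq (t + 1) n * c ^ t) =
      (n : ℝ) ^ (a - 1) *
        exp (∑ j ∈ range (n + 1), (log (t + 1 + j) - log (t + a + j)) - t * log c) := by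
  have hn₀ : (0 : ℝ) < n := by positivity
  have hprod : exp (∑ j ∈ range (n + 1), (log (t + 1 + j) - log (t + a + j))) =
      (∏ j ∈ range (n + 1), (t + 1 + j)) / ∏ j ∈ range (n + 1), (t + a + j) := by
    rw [exp_sum, ← prod_div_distrib]
    refine prod_congr rfl fun j _ ↦ ?_
    rw [exp_sub, exp_log (by positivity), exp_log (by positivity)]
  have hpow : (n : ℝ) ^ (t + a) = (n : ℝ) ^ (t + 1) * (n : ℝ) ^ (a - 1) := by
    rw [← rpow_add hn₀]; ring_nf
  have hP₁ : 0 < ∏ j ∈ range (n + 1), (t + 1 + (j : ℝ)) := prod_pos fun j _ ↦ by positivity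
  have hP₂ : 0 < ∏ j ∈ range (n + 1), (t + a + (j : ℝ)) := prod_pos fun j _ ↦ by positivity
  rw [exp_sub, hprod, mul_comm t, ← rpow_def_of_pos hc, GammaSeq, GammaSeq, hpow]
  have : (0 : ℝ) < n.factorial := by positivity
  have : (0 : ℝ) < c ^ t := by positivity
  have : (0 : ℝ) < n ^ (t + 1) := by positivity
  field_simp

theorem antitoneOn_Gamma_add_div_Gamma_add_one_mul_rpow {a : ℝ} (ha : 1 / 2 ≤ a) :
    AntitoneOn (fun x ↦ Gamma (x + a) / (Gamma (x + 1) * (2 * a) ^ x)) (Ici 0) := by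
  have h2a : 0 < 2 * a := by linarith
  have hlim : ∀ t ∈ Ici (0 : ℝ), Tendsto
      (fun n : ℕ ↦ GammaSeq (t + a) n / (GammaSeq (t + 1) n * (2 * a) ^ t)) atTop
      (𝓝 (Gamma (t + a) / (Gamma (t + 1) * (2 * a) ^ t))) := fun t (ht : 0 ≤ t) ↦
    (GammaSeq_tendsto_Gamma _).div ((GammaSeq_tendsto_Gamma _).mul_const _)
      (mul_pos (Gamma_pos_of_pos (by linarith)) (rpow_pos_of_pos h2a t)).ne'
  intro x hx y hy hxy
  refine le_of_tendsto_of_tendsto (hlim y hy) (hlim x hx)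
    (eventually_atTop.mpr ⟨1, fun n hn ↦ ?_⟩)
  dsimp only
  rw [GammaSeq_div_GammaSeq_mul_rpow (by linarith) h2a hy (by omega),
    GammaSeq_div_GammaSeq_mul_rpow (by linarith) h2a hx (by omega)]
  exact mul_le_mul_of_nonneg_left
    (exp_le_exp.mpr (antitoneOn_sum_log_sub_log_sub_mul_log ha (n + 1) hx hy hxy)) (by positivity)

theorem phi_k_antitoneOn (k : ℕ) (hk : 1 ≤ k) :
    AntitoneOn (fun x : ℝ => Real.Gamma (x + k / 2) / (Real.Gamma (x + 1) * (k : ℝ) ^ x))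
      (Set.Icc (0 : ℝ) 1) := by
  have hk' : (1 : ℝ) ≤ k := by exact_mod_cast hk
  have := antitoneOn_Gamma_add_div_Gamma_add_one_mul_rpow (a := k / 2) (by linarith)
  rw [mul_div_cancel₀ _ two_ne_zero] at this
  exact this.mono Icc_subset_Ici_self
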